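/- arXiv:2207.05089 — 6 statements merged into one kernel-verified Lean document; each statement's English description precedes it below -/
import Mathlib

section
/- Let n ≥ 1, let p ≥ 1, and let C be a real diagonal operator on the n-qubit Hilbert space with operator norm ‖C‖ ≤ n² (the diagonal entry of C at basis state z is the cost C(z)). Fix a threshold C₁ and let B_proj be the orthogonal projection onto the span of the computational basis states z with C(z) ≥ C₁, and let d₁ = Tr(B_proj) be the number of such states. Fix Δ ∈ (0,1). Call a string w ∈ {−1,1}ⁿ improvable if there exists a depth-p QAOA unitary U = e^{−iβ_p B}e^{−iγ_p C}···e^{−iβ_1 B}e^{−iγ_1 C} (for some parameters γ_1,…,γ_p, β_1,…,β_p ∈ [0,2π]) such that ⟨w|U†B_proj U|w⟩ > Δ. Then the number M of improvable strings satisfies M ≤ (2d₁/Δ)·(16πpn²/Δ)^{2p}. -/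
/-!
Each layer `e^{-iβB} e^{-iγC}` is unitary and, as a function of `(γ, β)`, Lipschitz with
constant `‖B‖ + ‖C‖ ≤ 2n²`. Moving every angle to the nearest of `K` midpoints of `[0, 2π]`
therefore moves `U` by at most `2pn²π/K` and `⟨w|U†B_proj U|w⟩` by at most twice that; for
`K = ⌈8πpn²/Δ⌉` every improvable string has `⟨w|U†B_proj U|w⟩ > Δ/2` for one of the `K^{2p}`
grid circuits. For a fixed unitary `U` the numbers `⟨w|U†B_proj U|w⟩` are nonnegative and sum
to `Tr(U†B_proj U) = d₁`, so by Markov's inequality at most `2d₁/Δ` strings exceed `Δ/2`.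
-/

open scoped Matrix Real

/-- The type of `n`-bit strings, identified with `{-1,1}ⁿ` via `sgn`. -/
abbrev Str (n : ℕ) := Fin n → Bool

noncomputable def sgn (b : Bool) : ℝ := if b then 1 else -1

/-- Operators on the `n`-qubit Hilbert space `ℂ^(2^n)`, in the computational basis. -/
abbrev Mat (n : ℕ) := Matrix (Str n) (Str n) ℂ

noncomputable def PauliZ (n : ℕ) (i : Fin n) : Mat n :=
  Matrix.diagonal fun z => (sgn (z i) : ℂ)

noncomputable def PauliX (n : ℕ) (i : Fin n) : Mat n :=
  Matrix.of fun z z' => if z' = Function.update z i (!z i) then 1 else 0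

noncomputable def mixer (n : ℕ) : Mat n := ∑ i, PauliX n i

noncomputable def mexp {ι : Type*} [Fintype ι] [DecidableEq ι] (A : Matrix ι ι ℂ) : Matrix ι ι ℂ :=
  NormedSpace.exp A

noncomputable def opNorm {ι : Type*} [Fintype ι] [DecidableEq ι] (A : Matrix ι ι ℂ) : ℝ :=
  ‖Matrix.toEuclideanCLM (𝕜 := ℂ) A‖

/-- `U = e^{−iβ_p B} e^{−iγ_p C} ⋯ e^{−iβ_1 B} e^{−iγ_1 C}`: layer `p` is the leftmost factor. -/
noncomputable def qaoaU (n : ℕ) (Cm : Mat n) (p : ℕ) (γ β : Fin p → ℝ) : Mat n :=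
  (List.ofFn fun k : Fin p =>
    mexp ((-(Complex.I * (β k.rev))) • mixer n) * mexp ((-(Complex.I * (γ k.rev))) • Cm)).prod

open scoped Matrix.Norms.L2Operator ComplexOrder
open NormedSpace Finset Complex

section NormedRing

variable {R : Type*} [NormedRing R]

theorem norm_mul_sub_mul_le {a b a' b' : R} (ha' : ‖a'‖ ≤ 1) (hb : ‖b‖ ≤ 1) :
    ‖a * b - a' * b'‖ ≤ ‖a - a'‖ + ‖b - b'‖ := by
  calc ‖a * b - a' * b'‖ = ‖(a - a') * b + a' * (b - b')‖ := by noncomm_ring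
    _ ≤ ‖a - a'‖ * ‖b‖ + ‖a'‖ * ‖b - b'‖ := norm_add_le_of_le (norm_mul_le _ _) (norm_mul_le _ _)
    _ ≤ ‖a - a'‖ + ‖b - b'‖ := by
      gcongr
      · exact mul_le_of_le_one_right (norm_nonneg _) hb
      · exact mul_le_of_le_one_left (norm_nonneg _) ha'

theorem norm_list_ofFn_prod_le_one [NormOneClass R] {m : ℕ} (f : Fin m → R)
    (hf : ∀ k, ‖f k‖ ≤ 1) : ‖(List.ofFn f).prod‖ ≤ 1 := by
  induction m with
  | zero => simp
  | succ m ih =>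
    rw [List.ofFn_succ, List.prod_cons]
    exact (norm_mul_le _ _).trans
      (mul_le_one₀ (hf 0) (norm_nonneg _) (ih _ fun k => hf k.succ))

theorem norm_list_ofFn_prod_sub_le [NormOneClass R] {m : ℕ} (f g : Fin m → R)
    (hf : ∀ k, ‖f k‖ ≤ 1) (hg : ∀ k, ‖g k‖ ≤ 1) :
    ‖(List.ofFn f).prod - (List.ofFn g).prod‖ ≤ ∑ k, ‖f k - g k‖ := by
  induction m with
  | zero => simp
  | succ m ih =>
    rw [List.ofFn_succ, List.ofFn_succ, List.prod_cons, List.prod_cons, Fin.sum_univ_succ]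
    refine (norm_mul_sub_mul_le (hg 0)
      (norm_list_ofFn_prod_le_one _ fun k => hf k.succ)).trans ?_
    gcongr
    exact ih _ _ (fun k => hf k.succ) (fun k => hg k.succ)

end NormedRing

theorem norm_star_mul_mul_sub_le {R : Type*} [NormedRing R] [StarRing R] [NormedStarGroup R]
    {e u v : R} (he : ‖e‖ ≤ 1) (hu : ‖u‖ ≤ 1) (hv : ‖v‖ ≤ 1) :
    ‖star u * e * u - star v * e * v‖ ≤ 2 * ‖u - v‖ := by
  have hsplit :
      star u * e * u - star v * e * v = star u * e * (u - v) + star (u - v) * (e * v) := by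
    rw [star_sub]; noncomm_ring
  have hue : ‖star u * e‖ ≤ 1 :=
    (norm_mul_le _ _).trans (by rw [norm_star]; exact mul_le_one₀ hu (norm_nonneg _) he)
  have hev : ‖e * v‖ ≤ 1 := (norm_mul_le _ _).trans (mul_le_one₀ he (norm_nonneg _) hv)
  calc ‖star u * e * u - star v * e * v‖
      ≤ ‖star u * e‖ * ‖u - v‖ + ‖star (u - v)‖ * ‖e * v‖ := by
        rw [hsplit]; exact norm_add_le_of_le (norm_mul_le _ _) (norm_mul_le _ _)
    _ ≤ 1 * ‖u - v‖ + ‖u - v‖ * 1 := by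
        rw [norm_star]; gcongr
    _ = 2 * ‖u - v‖ := by ring

section CStarAlgebra

variable {A : Type*} [CStarAlgebra A]

theorem exp_neg_I_mul_smul_mem_unitary {h : A} (hh : IsSelfAdjoint h) (t : ℝ) :
    exp ((-(I * t)) • h) ∈ unitary A :=
  -- the library lemma is stated for normed `ℚ`-algebras
  letI : NormedAlgebra ℚ A := .restrictScalars ℚ ℂ A
  exp_mem_unitary_of_mem_skewAdjoint (hh.smul_mem_skewAdjoint (by simp [skewAdjoint.mem_iff]))

theorem norm_exp_neg_I_mul_smul_sub_le [Nontrivial A] {h : A} (hh : IsSelfAdjoint h)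
    (s t : ℝ) : ‖exp ((-(I * s)) • h) - exp ((-(I * t)) • h)‖ ≤ ‖h‖ * |s - t| := by
  have hsmul (r : ℝ) : (-(I * r)) • h = r • (-I • h) := by
    rw [← Complex.coe_smul, smul_smul, mul_neg, mul_comm]
  have hderiv (r : ℝ) :
      HasDerivWithinAt (fun u : ℝ => exp (u • (-I • h))) (exp (r • (-I • h)) * (-I • h))
        Set.univ r :=
    (hasDerivAt_exp_smul_const _ r).hasDerivWithinAt
  have hbound (r : ℝ) : ‖exp (r • (-I • h)) * (-I • h)‖ ≤ ‖h‖ := by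
    rw [← hsmul, CStarRing.norm_mem_unitary_mul _ (exp_neg_I_mul_smul_mem_unitary hh r)]
    simp [norm_smul]
  simpa [hsmul, Real.norm_eq_abs] using
    convex_univ.norm_image_sub_le_of_norm_hasDerivWithin_le (fun r _ => hderiv r)
      (fun r _ => hbound r) (Set.mem_univ t) (Set.mem_univ s)

end CStarAlgebra

theorem Finset.card_filter_lt_le_sum_div {ι : Type*} (s : Finset ι) {f : ι → ℝ}
    (hf : ∀ i ∈ s, 0 ≤ f i) {t : ℝ} (ht : 0 < t) :
    (#{i ∈ s | t < f i} : ℝ) ≤ (∑ i ∈ s, f i) / t := by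
  rw [le_div_iff₀ ht, ← nsmul_eq_mul]
  calc #{i ∈ s | t < f i} • t ≤ ∑ i ∈ s with t < f i, f i :=
        card_nsmul_le_sum _ _ _ fun i hi => (mem_filter.mp hi).2.le
    _ ≤ ∑ i ∈ s, f i := sum_le_sum_of_subset_of_nonneg (filter_subset _ _) fun i hi _ => hf i hi

theorem Set.ncard_le_card_mul_of_subset_iUnion {α ι : Type*} [Finite α] [Fintype ι] {S : Set α}
    {T : ι → Set α} (hS : S ⊆ ⋃ i, T i) {b : ℝ} (hT : ∀ i, ((T i).ncard : ℝ) ≤ b) :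
    (S.ncard : ℝ) ≤ Fintype.card ι * b :=
  calc (S.ncard : ℝ) ≤ ∑ i, ((T i).ncard : ℝ) := by
        exact_mod_cast (Set.ncard_le_ncard hS).trans (Set.ncard_iUnion_le_of_fintype T)
    _ ≤ ∑ _i : ι, b := sum_le_sum fun i _ => hT i
    _ = Fintype.card ι * b := by rw [sum_const, card_univ, nsmul_eq_mul]

/-- The midpoints of the `K` subintervals of length `2L/K` of `[0, 2L]`. -/
noncomputable def midGrid (L : ℝ) (K : ℕ) (j : Fin K) : ℝ := (2 * j + 1) * L / K

theorem exists_abs_sub_midGrid_le {K : ℕ} (hK : 0 < K) {L θ : ℝ} (hL : 0 < L)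
    (hθ : θ ∈ Set.Icc 0 (2 * L)) : ∃ j, |θ - midGrid L K j| ≤ L / K := by
  obtain ⟨hθ0, hθL⟩ := hθ
  have hKpos : (0 : ℝ) < K := Nat.cast_pos.mpr hK
  set x := θ * K / (2 * L)
  have hx0 : 0 ≤ x := by positivity
  have hxK : x ≤ K := by rw [div_le_iff₀ (by positivity)]; nlinarith
  set j := min ⌊x⌋₊ (K - 1)
  have hjK : j < K := (min_le_right _ _).trans_lt (Nat.sub_lt hK one_pos)
  refine ⟨⟨j, hjK⟩, ?_⟩
  have hjx : (j : ℝ) ≤ x := (Nat.cast_le.mpr (min_le_left _ _)).trans (Nat.floor_le hx0)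
  have hxj : x ≤ j + 1 := by
    rcases le_total ⌊x⌋₊ (K - 1) with h | h
    · rw [show j = ⌊x⌋₊ from min_eq_left h]; exact (Nat.lt_floor_add_one x).le
    · rw [show j = K - 1 from min_eq_right h, Nat.cast_sub hK, Nat.cast_one, sub_add_cancel]
      exact hxK
  have hθx : θ - midGrid L K ⟨j, hjK⟩ = L / K * (2 * (x - j) - 1) := by
    simp only [midGrid, x]; field_simp; ring
  rw [hθx, abs_mul, abs_of_pos (by positivity)]
  exact mul_le_of_le_one_right (by positivity) (abs_le.mpr ⟨by linarith, by linarith⟩)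

namespace Matrix

variable {ι : Type*} [Fintype ι] [DecidableEq ι]

theorem norm_apply_le_l2_opNorm {𝕜 : Type*} [RCLike 𝕜] (M : Matrix ι ι 𝕜) (i j : ι) :
    ‖M i j‖ ≤ ‖M‖ := by
  have h := l2_opNorm_mulVec M (EuclideanSpace.single j 1)
  rw [PiLp.norm_single, norm_one, mul_one] at h
  refine le_trans (le_of_eq ?_) ((PiLp.norm_apply_le _ i).trans h)
  simp

theorem abs_re_conjTranspose_mul_mul_apply_sub_le {P U V : Matrix ι ι ℂ} (hP : ‖P‖ ≤ 1)
    (hU : ‖U‖ ≤ 1) (hV : ‖V‖ ≤ 1) (w : ι) :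
    |((Uᴴ * P * U) w w).re - ((Vᴴ * P * V) w w).re| ≤ 2 * ‖U - V‖ :=
  calc _ = |((Uᴴ * P * U - Vᴴ * P * V) w w).re| := by simp
    _ ≤ ‖Uᴴ * P * U - Vᴴ * P * V‖ := (abs_re_le_norm _).trans (norm_apply_le_l2_opNorm _ w w)
    _ ≤ 2 * ‖U - V‖ := by
      simpa only [star_eq_conjTranspose] using norm_star_mul_mul_sub_le hP hU hV

theorem isStarProjection_diagonal_indicator (q : ι → Prop) [DecidablePred q] :
    IsStarProjection (diagonal fun i => if q i then (1 : ℂ) else 0) where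
  isIdempotentElem := by simp [IsIdempotentElem, diagonal_mul_diagonal]
  isSelfAdjoint := (isHermitian_diagonal_iff.mpr fun i => by split_ifs <;> simp).isSelfAdjoint

theorem ncard_lt_re_diag_le {U : Matrix ι ι ℂ} (hU : U ∈ unitary (Matrix ι ι ℂ))
    (q : ι → Prop) [DecidablePred q] {t : ℝ} (ht : 0 < t) :
    ({w | t < ((Uᴴ * diagonal (fun i => if q i then (1 : ℂ) else 0) * U) w w).re}.ncard : ℝ)
      ≤ {i | q i}.ncard / t := by
  set P : Matrix ι ι ℂ := diagonal fun i => if q i then 1 else 0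
  have hP : IsStarProjection P := isStarProjection_diagonal_indicator q
  have hpsd : (Uᴴ * P * U).PosSemidef := by
    have : (P * U)ᴴ * (P * U) = Uᴴ * P * U := by
      rw [conjTranspose_mul, ← star_eq_conjTranspose P, hP.isSelfAdjoint.star_eq, Matrix.mul_assoc,
        ← Matrix.mul_assoc P, hP.isIdempotentElem.eq, Matrix.mul_assoc]
    exact this ▸ posSemidef_conjTranspose_mul_self _
  have htrace : ∑ w, ((Uᴴ * P * U) w w).re = {i | q i}.ncard :=
    calc ∑ w, ((Uᴴ * P * U) w w).re = (trace (Uᴴ * P * U)).re := by simp [trace]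
      _ = (trace P).re := by
        rw [trace_mul_cycle, ← star_eq_conjTranspose, Unitary.mul_star_self_of_mem hU, one_mul]
      _ = {i | q i}.ncard := by simp [P, trace, Set.ncard_eq_toFinset_card']
  rw [← htrace, Set.ncard_eq_toFinset_card', Set.toFinset_ofPred]
  exact card_filter_lt_le_sum_div _ (fun w _ => (RCLike.nonneg_iff.mp hpsd.diag_nonneg).1) ht

end Matrix

section Pauli

variable {n : ℕ}

theorem eq_update_not_comm (z z' : Str n) (i : Fin n) :
    z' = Function.update z i (!z i) ↔ z = Function.update z' i (!z' i) := by
  constructor <;> rintro rfl <;> simp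

theorem pauliX_isSelfAdjoint (i : Fin n) : IsSelfAdjoint (PauliX n i) := by
  ext z z'
  simp [PauliX, eq_update_not_comm z' z i, apply_ite]

theorem pauliX_mul_self (i : Fin n) : PauliX n i * PauliX n i = 1 := by
  ext z z'
  simp only [PauliX, Matrix.mul_apply, Matrix.of_apply, ite_mul, one_mul, zero_mul,
    sum_ite_eq' univ (Function.update z i (!z i)), mem_univ, if_true]
  simp [Matrix.one_apply, eq_comm]

theorem pauliX_mem_unitary (i : Fin n) : PauliX n i ∈ unitary (Mat n) := by
  rw [Unitary.mem_iff, (pauliX_isSelfAdjoint i).star_eq, and_self]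
  exact pauliX_mul_self i

theorem mixer_isSelfAdjoint : IsSelfAdjoint (mixer n) :=
  isSelfAdjoint_sum _ fun i _ => pauliX_isSelfAdjoint i

theorem norm_mixer_le : ‖mixer n‖ ≤ n :=
  (norm_sum_le _ _).trans_eq <| by
    simp [CStarRing.norm_of_mem_unitary (pauliX_mem_unitary _)]

end Pauli

section Qaoa

variable {n : ℕ} {Cm : Mat n} {p : ℕ}

theorem qaoaU_mem_unitary (hC : IsSelfAdjoint Cm) (γ β : Fin p → ℝ) :
    qaoaU n Cm p γ β ∈ unitary (Mat n) :=
  list_prod_mem <| by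
    simp only [List.forall_mem_ofFn_iff]
    exact fun k => mul_mem (exp_neg_I_mul_smul_mem_unitary mixer_isSelfAdjoint _)
      (exp_neg_I_mul_smul_mem_unitary hC _)

theorem norm_qaoaU_sub_le (hC : IsSelfAdjoint Cm) {γ β γ' β' : Fin p → ℝ} {ε : ℝ}
    (hγ : ∀ k, |γ k - γ' k| ≤ ε) (hβ : ∀ k, |β k - β' k| ≤ ε) :
    ‖qaoaU n Cm p γ β - qaoaU n Cm p γ' β'‖ ≤ p * ((n + ‖Cm‖) * ε) := by
  have hB (β : ℝ) := exp_neg_I_mul_smul_mem_unitary (mixer_isSelfAdjoint (n := n)) β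
  have hC' (γ : ℝ) := exp_neg_I_mul_smul_mem_unitary hC γ
  have hlayer (γ β : ℝ) : ‖mexp ((-(I * β)) • mixer n) * mexp ((-(I * γ)) • Cm)‖ ≤ 1 :=
    (CStarRing.norm_of_mem_unitary (mul_mem (hB β) (hC' γ))).le
  refine (norm_list_ofFn_prod_sub_le _ _ (fun k => hlayer _ _) (fun k => hlayer _ _)).trans ?_
  calc _ ≤ ∑ _k : Fin p, (n + ‖Cm‖) * ε := sum_le_sum fun k _ => by
          refine (norm_mul_sub_mul_le (CStarRing.norm_of_mem_unitary (hB _)).le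
            (CStarRing.norm_of_mem_unitary (hC' _)).le).trans ?_
          rw [add_mul]
          gcongr
          · exact (norm_exp_neg_I_mul_smul_sub_le mixer_isSelfAdjoint _ _).trans
              (mul_le_mul norm_mixer_le (hβ _) (abs_nonneg _) (Nat.cast_nonneg _))
          · exact (norm_exp_neg_I_mul_smul_sub_le hC _ _).trans
              (mul_le_mul_of_nonneg_left (hγ _) (norm_nonneg _))
    _ = p * ((n + ‖Cm‖) * ε) := by simp

/-- `⟨w|U†PU|w⟩` for the QAOA unitary `U = U(γ, β)`. -/
noncomputable def qaoaExpect (n : ℕ) (Cm P : Mat n) (p : ℕ) (γ β : Fin p → ℝ) (w : Str n) :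
    ℝ :=
  (((qaoaU n Cm p γ β)ᴴ * P * qaoaU n Cm p γ β) w w).re

def qaoaImprovable (n : ℕ) (Cm P : Mat n) (p : ℕ) (Δ : ℝ) : Set (Str n) :=
  {w | ∃ γ β : Fin p → ℝ, (∀ k, γ k ∈ Set.Icc 0 (2 * π)) ∧ (∀ k, β k ∈ Set.Icc 0 (2 * π)) ∧
    Δ < qaoaExpect n Cm P p γ β w}

theorem abs_qaoaExpect_sub_le (hC : IsSelfAdjoint Cm) {P : Mat n} (hP : ‖P‖ ≤ 1)
    {γ β γ' β' : Fin p → ℝ} {ε : ℝ} (hγ : ∀ k, |γ k - γ' k| ≤ ε) (hβ : ∀ k, |β k - β' k| ≤ ε)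
    (w : Str n) :
    |qaoaExpect n Cm P p γ β w - qaoaExpect n Cm P p γ' β' w| ≤ 2 * (p * ((n + ‖Cm‖) * ε)) :=
  (Matrix.abs_re_conjTranspose_mul_mul_apply_sub_le hP
    (CStarRing.norm_of_mem_unitary (qaoaU_mem_unitary hC γ β)).le
    (CStarRing.norm_of_mem_unitary (qaoaU_mem_unitary hC γ' β')).le w).trans
    (mul_le_mul_of_nonneg_left (norm_qaoaU_sub_le hC hγ hβ) two_pos.le)

theorem qaoaImprovable_subset_iUnion (hC : IsSelfAdjoint Cm) {P : Mat n} (hP : ‖P‖ ≤ 1)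
    {Δ : ℝ} {K : ℕ} (hK : 0 < K) (hmesh : 2 * (p * ((n + ‖Cm‖) * (π / K))) ≤ Δ / 2) :
    qaoaImprovable n Cm P p Δ ⊆ ⋃ ν : (Fin p → Fin K) × (Fin p → Fin K),
      {w | Δ / 2 < qaoaExpect n Cm P p (midGrid π K ∘ ν.1) (midGrid π K ∘ ν.2) w} := by
  rintro w ⟨γ, β, hγ, hβ, hw⟩
  choose a ha using fun k => exists_abs_sub_midGrid_le hK Real.pi_pos (hγ k)
  choose b hb using fun k => exists_abs_sub_midGrid_le hK Real.pi_pos (hβ k)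
  have hclose : |qaoaExpect n Cm P p γ β w
      - qaoaExpect n Cm P p (midGrid π K ∘ a) (midGrid π K ∘ b) w| ≤ _ :=
    abs_qaoaExpect_sub_le hC hP ha hb w
  refine Set.mem_iUnion.mpr ⟨(a, b), ?_⟩
  show Δ / 2 < qaoaExpect n Cm P p (midGrid π K ∘ a) (midGrid π K ∘ b) w
  linarith [(abs_le.mp hclose).2]

theorem ncard_qaoaImprovable_le (hC : IsSelfAdjoint Cm) (q : Str n → Prop) [DecidablePred q]
    {Δ : ℝ} (hΔ : 0 < Δ) {K : ℕ} (hK : 0 < K)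
    (hmesh : 2 * (p * ((n + ‖Cm‖) * (π / K))) ≤ Δ / 2) :
    ((qaoaImprovable n Cm (Matrix.diagonal fun z => if q z then 1 else 0) p Δ).ncard : ℝ)
      ≤ K ^ (2 * p) * (2 * {z | q z}.ncard / Δ) := by
  calc _ ≤ Fintype.card ((Fin p → Fin K) × (Fin p → Fin K)) * ({z | q z}.ncard / (Δ / 2)) :=
        Set.ncard_le_card_mul_of_subset_iUnion
          (qaoaImprovable_subset_iUnion hC
            (Matrix.isStarProjection_diagonal_indicator q).norm_le hK hmesh)
          fun ν => Matrix.ncard_lt_re_diag_le (qaoaU_mem_unitary hC _ _) q (half_pos hΔ)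
    _ = K ^ (2 * p) * (2 * {z | q z}.ncard / Δ) := by
        simp only [Fintype.card_prod, Fintype.card_fun, Fintype.card_fin]; push_cast; ring

end Qaoa

theorem stmt0 (n p : ℕ) (hn : 1 ≤ n) (hp : 1 ≤ p)
    (c : Str n → ℝ)
    -- `C` is the real diagonal cost operator, with operator norm at most `n²`
    (Cm : Mat n) (hCm : Cm = Matrix.diagonal fun z => (c z : ℂ))
    (hCnorm : opNorm Cm ≤ (n : ℝ) ^ 2)
    (C₁ : ℝ)
    -- `B_proj` is the projection onto basis states of cost at least `C₁`
    (Bproj : Mat n) (hBproj : Bproj = Matrix.diagonal fun z => if C₁ ≤ c z then (1 : ℂ) else 0)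
    -- `d₁ = Tr B_proj` is the number of such states
    (d₁ : ℕ) (hd₁ : d₁ = {z : Str n | C₁ ≤ c z}.ncard)
    (Δ : ℝ) (hΔ : Δ ∈ Set.Ioo (0 : ℝ) 1)
    -- `M` is the number of improvable strings
    (M : ℕ)
    (hM : M = {w : Str n | ∃ γ β : Fin p → ℝ,
        (∀ k, γ k ∈ Set.Icc 0 (2 * π)) ∧ (∀ k, β k ∈ Set.Icc 0 (2 * π)) ∧
        Δ < (((qaoaU n Cm p γ β)ᴴ * Bproj * qaoaU n Cm p γ β) w w).re}.ncard) :
    (M : ℝ) ≤ (2 * d₁ / Δ) * (16 * π * p * (n : ℝ) ^ 2 / Δ) ^ (2 * p) := by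
  obtain ⟨hΔ, hΔ1⟩ := hΔ
  have hC : IsSelfAdjoint Cm :=
    hCm ▸ (Matrix.isHermitian_diagonal_iff.mpr fun z => Complex.conj_ofReal (c z)).isSelfAdjoint
  set x := 8 * π * p * n ^ 2 / Δ
  have hx : 1 ≤ x := by
    rw [le_div_iff₀ hΔ]
    have : (1 : ℝ) ≤ p * n ^ 2 := one_le_mul_of_one_le_of_one_le (by exact_mod_cast hp)
      (one_le_pow₀ (by exact_mod_cast hn))
    nlinarith [Real.pi_gt_three]
  have hK : 0 < ⌈x⌉₊ := Nat.ceil_pos.mpr (by linarith)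
  have hmesh : 2 * (p * ((n + ‖Cm‖) * (π / ⌈x⌉₊))) ≤ Δ / 2 := by
    have hnC : (n : ℝ) + ‖Cm‖ ≤ 2 * n ^ 2 := by
      have : (n : ℝ) ≤ n ^ 2 := by exact_mod_cast Nat.le_self_pow two_ne_zero n
      linarith [show ‖Cm‖ ≤ n ^ 2 from hCnorm]
    have hxK : x ≤ ⌈x⌉₊ := Nat.le_ceil x
    calc _ ≤ 2 * (p * (2 * n ^ 2 * (π / ⌈x⌉₊))) := by gcongr
      _ = x * Δ / (2 * ⌈x⌉₊) := by simp only [x]; field_simp; ring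
      _ ≤ Δ / 2 := by rw [div_le_div_iff₀ (by positivity) two_pos]; nlinarith
  subst hM hd₁ hBproj
  calc _ ≤ (⌈x⌉₊ : ℝ) ^ (2 * p) * (2 * {z | C₁ ≤ c z}.ncard / Δ) :=
        ncard_qaoaImprovable_le hC (fun z => C₁ ≤ c z) hΔ hK hmesh
    _ ≤ _ := by
        rw [mul_comm]
        gcongr
        exact (Nat.ceil_le_two_mul (by linarith)).trans_eq (by simp only [x]; ring)
end

section
/- Let G = (V,E) be a graph with m edges and maximum degree at most d ≥ 1, and let the cost function be C(z) = Σ_{⟨i,j⟩∈E} C_{⟨i,j⟩}(z_i, z_j) for z ∈ {−1,1}^V, where each edge term satisfies |C_{⟨i,j⟩}(·,·)| ≤ 1. Let c̄ = 2^{−|V|} Σ_{z∈{−1,1}^V} C(z)/m be the average cost per edge. Then for uniformly random z ∈ {−1,1}^V and any t > 0, the probability that |C(z)/m − c̄| ≥ t is at most (2d−1)/(m t²). -/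
/-!
Write `X_e = C_e - 𝔼 C_e` for the centred edge terms, so that `C/m - c̄ = (∑_e X_e)/m`.
Each `X_e` has mean zero and second moment at most `1`, and `X_e`, `X_f` are uncorrelated
when the edges `e`, `f` are disjoint, because they depend on disjoint sets of coordinates.
An edge meets at most `2d - 1` edges (itself included), so the variance of `C/m` is at most
`(2d - 1)/m`, and Chebyshev's inequality gives the bound.
-/

/-- Probability of an event under the uniform distribution on a finite type. -/
noncomputable def unifPr {α : Type*} [Fintype α] (A : Set α) : ℝ :=
  (A.ncard : ℝ) / Fintype.card α

open Finset

noncomputable def unifMean {α : Type*} [Fintype α] (f : α → ℝ) : ℝ :=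
  (∑ x, f x) / Fintype.card α

section UniformDistribution

variable {α : Type*} [Fintype α]

lemma sum_sub_unifMean (f : α → ℝ) : ∑ x, (f x - unifMean f) = 0 := by
  rcases isEmpty_or_nonempty α with hα | hα
  · simp
  · rw [sum_sub_distrib, sum_const, card_univ, nsmul_eq_mul, unifMean,
      mul_div_cancel₀ _ (by positivity), sub_self]

lemma sum_sub_unifMean_sq_le (f : α → ℝ) : ∑ x, (f x - unifMean f) ^ 2 ≤ ∑ x, f x ^ 2 := by
  set μ := unifMean f
  calc ∑ x, (f x - μ) ^ 2 = ∑ x, f x ^ 2 - 2 * μ * ∑ x, (f x - μ) - ∑ _x : α, μ ^ 2 := by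
        rw [mul_sum, ← sum_sub_distrib, ← sum_sub_distrib]
        exact sum_congr rfl fun x _ => by ring
    _ ≤ ∑ x, f x ^ 2 := by
        rw [sum_sub_unifMean, mul_zero, sub_zero, sub_le_self_iff]
        positivity

lemma unifPr_le_sum_sq_div (f : α → ℝ) (μ : ℝ) {t : ℝ} (ht : 0 < t) :
    unifPr {x | t ≤ |f x - μ|} ≤ (∑ x, (f x - μ) ^ 2) / (Fintype.card α * t ^ 2) := by
  classical
  have hfar : (#{x | t ≤ |f x - μ|} : ℝ) * t ^ 2 ≤ ∑ x, (f x - μ) ^ 2 :=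
    calc (#{x | t ≤ |f x - μ|} : ℝ) * t ^ 2 ≤ ∑ x with t ≤ |f x - μ|, (f x - μ) ^ 2 := by
          rw [← nsmul_eq_mul]
          refine card_nsmul_le_sum _ _ _ fun x hx => ?_
          rw [← sq_abs (f x - μ)]
          exact pow_le_pow_left₀ ht.le (mem_filter.mp hx).2 2
      _ ≤ ∑ x, (f x - μ) ^ 2 :=
          sum_le_sum_of_subset_of_nonneg (filter_subset _ _) fun x _ _ => sq_nonneg _
  rw [unifPr, Set.ncard_eq_toFinset_card', Set.toFinset_ofPred,
    ← mul_div_mul_right _ _ (pow_ne_zero 2 ht.ne')]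
  gcongr

end UniformDistribution

lemma sum_mul_sum_eq_card_mul_sum_mul {ι : Type*} [Fintype ι] [DecidableEq ι]
    {β : ι → Type*} [∀ i, Fintype (β i)] {f g : (∀ i, β i) → ℝ} {s : Set ι}
    (hf : DependsOn f s) (hg : DependsOn g sᶜ) :
    (∑ x, f x) * ∑ x, g x = Fintype.card (∀ i, β i) * ∑ x, f x * g x := by
  classical
  -- Exchanging the coordinates outside `s` is an involution of pairs that carries
  -- `(x, y)` to a pair whose first entry agrees with `x` on `s` and with `y` off `s`.
  let splice (x y : ∀ i, β i) : ∀ i, β i := fun i => if i ∈ s then x i else y i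
  have hswap : Function.Involutive fun p : (∀ i, β i) × (∀ i, β i) =>
      (splice p.1 p.2, splice p.2 p.1) := by
    rintro ⟨x, y⟩
    ext i <;> by_cases hi : i ∈ s <;> simp [splice, hi]
  calc (∑ x, f x) * ∑ x, g x
      = ∑ p : (∀ i, β i) × (∀ i, β i), f (splice p.1 p.2) * g (splice p.1 p.2) := by
        rw [sum_mul_sum, ← Fintype.sum_prod_type']
        refine sum_congr rfl fun p _ => ?_
        congr 1
        · exact hf fun i hi => by simp [splice, hi]
        · exact hg fun i hi => by simp [splice, Set.notMem_of_mem_compl hi]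
    _ = ∑ p : (∀ i, β i) × (∀ i, β i), f p.1 * g p.1 :=
        Equiv.sum_comp hswap.toPerm (fun p => f p.1 * g p.1)
    _ = Fintype.card (∀ i, β i) * ∑ x, f x * g x := by
        rw [Fintype.sum_prod_type]
        simp only [sum_const, card_univ, nsmul_eq_mul, ← mul_sum]

lemma sum_sq_sum_le_of_sparse_correlations {Ω ι : Type*} [Fintype Ω] (s : Finset ι) (X : ι → Ω → ℝ)
    (r : ι → ι → Prop) [DecidableRel r] {B k : ℝ}
    (horth : ∀ e ∈ s, ∀ e' ∈ s, ¬ r e e' → ∑ z, X e z * X e' z = 0)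
    (hsq : ∀ e ∈ s, ∑ z, X e z ^ 2 ≤ B) (hr : ∀ e ∈ s, (#{e' ∈ s | r e e'} : ℝ) ≤ k) :
    ∑ z, (∑ e ∈ s, X e z) ^ 2 ≤ #s * k * B := by
  have hcov : ∀ e ∈ s, ∀ e' ∈ s, ∑ z, X e z * X e' z ≤ B := by
    intro e he e' he'
    have hB : 0 ≤ B := (sum_nonneg fun z _ => sq_nonneg (X e z)).trans (hsq e he)
    refine le_of_abs_le (abs_le_of_sq_le_sq ?_ hB)
    calc (∑ z, X e z * X e' z) ^ 2 ≤ (∑ z, X e z ^ 2) * ∑ z, X e' z ^ 2 :=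
          sum_mul_sq_le_sq_mul_sq _ _ _
      _ ≤ B ^ 2 := by
          rw [sq]
          exact mul_le_mul (hsq e he) (hsq e' he') (sum_nonneg fun z _ => sq_nonneg _) hB
  have hrow : ∀ e ∈ s, ∑ e' ∈ s, ∑ z, X e z * X e' z ≤ k * B := by
    intro e he
    have hB : 0 ≤ B := (sum_nonneg fun z _ => sq_nonneg (X e z)).trans (hsq e he)
    rw [← sum_filter_of_ne fun e' he' hne => by_contra fun h => hne (horth e he e' he' h)]
    calc ∑ e' ∈ s with r e e', ∑ z, X e z * X e' z ≤ #{e' ∈ s | r e e'} • B :=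
          sum_le_card_nsmul _ _ _ fun e' he' => hcov e he e' (mem_filter.mp he').1
      _ ≤ k * B := by
          rw [nsmul_eq_mul]
          exact mul_le_mul_of_nonneg_right (hr e he) hB
  calc ∑ z, (∑ e ∈ s, X e z) ^ 2 = ∑ e ∈ s, ∑ e' ∈ s, ∑ z, X e z * X e' z := by
        simp_rw [sq, sum_mul_sum]
        rw [sum_comm]
        exact sum_congr rfl fun e _ => sum_comm
    _ ≤ ∑ _e ∈ s, (k * B) := sum_le_sum hrow
    _ = #s * k * B := by rw [sum_const, nsmul_eq_mul, mul_assoc]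

open Classical in
lemma SimpleGraph.card_edges_meeting_add_one_le {V : Type*} [Fintype V] [DecidableEq V]
    (G : SimpleGraph V) [DecidableRel G.Adj] {d : ℕ} (hdeg : ∀ v, G.degree v ≤ d)
    {e : Sym2 V} (he : e ∈ G.edgeFinset) : #{e' ∈ G.edgeFinset | ∃ v ∈ e, v ∈ e'} + 1 ≤ 2 * d := by
  induction e using Sym2.ind with
  | _ a b =>
  have hab : G.Adj a b := G.mem_edgeFinset.mp he
  have hsub : {e' ∈ G.edgeFinset | ∃ v ∈ s(a, b), v ∈ e'}
      ⊆ G.incidenceFinset a ∪ G.incidenceFinset b := by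
    intro e' hmem
    obtain ⟨he', v, hv, hve'⟩ := mem_filter.mp hmem
    rw [SimpleGraph.mem_edgeFinset] at he'
    rw [mem_union, SimpleGraph.mem_incidenceFinset, SimpleGraph.mem_incidenceFinset]
    rcases Sym2.mem_iff.mp hv with rfl | rfl
    · exact .inl ⟨he', hve'⟩
    · exact .inr ⟨he', hve'⟩
  have hshared : s(a, b) ∈ G.incidenceFinset a ∩ G.incidenceFinset b := by
    rw [mem_inter, SimpleGraph.mem_incidenceFinset, SimpleGraph.mem_incidenceFinset]
    exact ⟨⟨hab, Sym2.mem_mk_left a b⟩, hab, Sym2.mem_mk_right a b⟩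
  have hunion := card_union_add_card_inter (G.incidenceFinset a) (G.incidenceFinset b)
  have hinter := card_pos.mpr ⟨_, hshared⟩
  rw [G.card_incidenceFinset_eq_degree, G.card_incidenceFinset_eq_degree] at hunion
  have := card_le_card hsub
  have := hdeg a
  have := hdeg b
  omega

open Classical in
lemma sum_sq_sum_centred_edge_terms_le {V β : Type*} [Fintype V] [DecidableEq V] [Fintype β]
    (G : SimpleGraph V) [DecidableRel G.Adj] {d : ℕ} (hdeg : ∀ v, G.degree v ≤ d)
    (F : Sym2 V → (V → β) → ℝ) (hFlocal : ∀ e ∈ G.edgeFinset, DependsOn (F e) {v | v ∈ e})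
    (hFbound : ∀ e ∈ G.edgeFinset, ∀ z, |F e z| ≤ 1) :
    ∑ z, (∑ e ∈ G.edgeFinset, (F e z - unifMean (F e))) ^ 2
      ≤ #G.edgeFinset * (2 * d - 1) * Fintype.card (V → β) := by
  have hX : ∀ e ∈ G.edgeFinset, DependsOn (fun z => F e z - unifMean (F e)) {v | v ∈ e} :=
    fun e he z z' h => congrArg (· - unifMean (F e)) (hFlocal e he h)
  refine sum_sq_sum_le_of_sparse_correlations _ _ (fun e e' => ∃ v ∈ e, v ∈ e') ?_ ?_ ?_
  · intro e he e' he' hdisj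
    have h := sum_mul_sum_eq_card_mul_sum_mul (hX e he)
      ((hX e' he').mono fun v hv hve => hdisj ⟨v, hve, hv⟩)
    rw [sum_sub_unifMean, zero_mul, eq_comm, mul_eq_zero] at h
    rcases h with h | h
    · have := Fintype.card_eq_zero_iff.mp (by exact_mod_cast h)
      simp
    · exact h
  · intro e he
    calc ∑ z, (F e z - unifMean (F e)) ^ 2 ≤ ∑ z, F e z ^ 2 := sum_sub_unifMean_sq_le _
      _ ≤ ∑ _z : V → β, (1 : ℝ) :=
          sum_le_sum fun z _ => (sq_le_one_iff_abs_le_one _).mpr (hFbound e he z)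
      _ = Fintype.card (V → β) := by simp
  · intro e he
    have h := Nat.cast_le (α := ℝ) |>.mpr (G.card_edges_meeting_add_one_le hdeg he)
    push_cast at h
    linarith

theorem stmt7_general {V : Type*} [Fintype V] [DecidableEq V]
    (G : SimpleGraph V) [DecidableRel G.Adj]
    (d m : ℕ) (hm : G.edgeFinset.card = m)
    (hdeg : ∀ v, G.degree v ≤ d)
    -- the edge terms `C_{⟨i,j⟩}(z_i, z_j)`: a number attached to each edge and string,
    -- depending only on the two endpoint bits, and bounded by 1 in absolute value
    (F : Sym2 V → (V → Bool) → ℝ)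
    (hFlocal : ∀ e ∈ G.edgeFinset, ∀ z z' : V → Bool,
      (∀ v ∈ e, z v = z' v) → F e z = F e z')
    (hFbound : ∀ e ∈ G.edgeFinset, ∀ z : V → Bool, |F e z| ≤ 1)
    -- the total cost function and its average value per edge
    (C : (V → Bool) → ℝ) (hC : ∀ z, C z = ∑ e ∈ G.edgeFinset, F e z)
    (cbar : ℝ)
    (hcbar : cbar = (∑ z : V → Bool, C z / m) / 2 ^ (Fintype.card V))
    (t : ℝ) (ht : 0 < t) :
    unifPr {z : V → Bool | t ≤ |C z / m - cbar|} ≤ (2 * d - 1) / (m * t ^ 2) := by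
  rcases Nat.eq_zero_or_pos m with rfl | hm0
  · have hcbar0 : cbar = 0 := by simp [hcbar]
    have hempty : {z : V → Bool | t ≤ |C z / ((0 : ℕ) : ℝ) - cbar|} = ∅ :=
      Set.eq_empty_of_forall_notMem fun z hz => ht.not_ge (by simpa [hcbar0] using hz)
    rw [hempty, unifPr, Set.ncard_empty, Nat.cast_zero, zero_div, zero_mul, div_zero]
  have hcard : (Fintype.card (V → Bool) : ℝ) = 2 ^ Fintype.card V := by simp
  have hcentre : ∀ z, C z / m - cbar = (∑ e ∈ G.edgeFinset, (F e z - unifMean (F e))) / m := by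
    intro z
    rw [sum_sub_distrib, sub_div, hC, hcbar, ← hcard]
    simp only [hC, unifMean, ← sum_div]
    rw [sum_comm]
    ring
  have hvar := sum_sq_sum_centred_edge_terms_le G hdeg F
    (fun e he z z' h => hFlocal e he z z' h) hFbound
  calc unifPr {z : V → Bool | t ≤ |C z / m - cbar|}
      ≤ (∑ z, (C z / m - cbar) ^ 2) / (Fintype.card (V → Bool) * t ^ 2) :=
        unifPr_le_sum_sq_div _ _ ht
    _ = (∑ z, (∑ e ∈ G.edgeFinset, (F e z - unifMean (F e))) ^ 2)
          / (m ^ 2 * Fintype.card (V → Bool) * t ^ 2) := by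
        simp_rw [hcentre, div_pow, ← sum_div, div_div]
        ring
    _ ≤ (m * (2 * d - 1) * Fintype.card (V → Bool))
          / (m ^ 2 * Fintype.card (V → Bool) * t ^ 2) := by
        rw [← hm]
        exact div_le_div_of_nonneg_right hvar (by positivity)
    _ = (2 * d - 1) / (m * t ^ 2) := by
        field_simp

theorem stmt7 {V : Type*} [Fintype V] [DecidableEq V]
    (G : SimpleGraph V) [DecidableRel G.Adj]
    (d m : ℕ) (hd : 1 ≤ d) (hm : G.edgeFinset.card = m)
    (hdeg : ∀ v, G.degree v ≤ d)
    -- the edge terms `C_{⟨i,j⟩}(z_i, z_j)`: a number attached to each edge and string,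
    -- depending only on the two endpoint bits, and bounded by 1 in absolute value
    (F : Sym2 V → (V → Bool) → ℝ)
    (hFlocal : ∀ e ∈ G.edgeFinset, ∀ z z' : V → Bool,
      (∀ v ∈ e, z v = z' v) → F e z = F e z')
    (hFbound : ∀ e ∈ G.edgeFinset, ∀ z : V → Bool, |F e z| ≤ 1)
    -- the total cost function and its average value per edge
    (C : (V → Bool) → ℝ) (hC : ∀ z, C z = ∑ e ∈ G.edgeFinset, F e z)
    (cbar : ℝ)
    (hcbar : cbar = (∑ z : V → Bool, C z / m) / 2 ^ (Fintype.card V))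
    (t : ℝ) (ht : 0 < t) :
    unifPr {z : V → Bool | t ≤ |C z / m - cbar|} ≤ (2 * d - 1) / (m * t ^ 2) :=
  stmt7_general G d m hm hdeg F hFlocal hFbound C hC cbar hcbar t ht
end

section
/- Let H be a Hermitian N×N complex matrix, let β ≥ 0, and let ρ_β = e^{−βH}/Tr(e^{−βH}) be the associated thermal (Gibbs) density matrix. Then for every unitary N×N matrix U, Tr(H U ρ_β U†) ≥ Tr(H ρ_β); that is, no unitary conjugation of the thermal state can lower the expected energy. -/
/-!
STATEMENT 8: The principle of minimum energy: no unitary conjugation of a thermal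
(Gibbs) state can lower the expected energy, i.e.
`Tr(H U ρ_β U†) ≥ Tr(H ρ_β)` for every unitary `U`.
-/

open scoped Matrix

/-!
The Gibbs state is `f(H)` for the antitone function `f(x) = e^{-βx} / Z`, and the inequality holds
for every antitone `f`. Diagonalise `H = V diag(λ) V†` and put `W = V† U V`; then
`Tr(H U f(H) U†) = ∑ᵢⱼ |Wᵢⱼ|² λᵢ f(λⱼ)`, and `(|Wᵢⱼ|²)` is doubly stochastic since `W` is unitary.
An antiderivative `Φ` of `f` is concave, so `(λᵢ - λⱼ) f(λⱼ) ≥ Φ(λᵢ) - Φ(λⱼ)`; averaged against a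
doubly stochastic matrix the right-hand side vanishes, leaving
`∑ᵢⱼ |Wᵢⱼ|² λᵢ f(λⱼ) ≥ ∑ⱼ λⱼ f(λⱼ) = Tr(H f(H))`.
-/

open Matrix

theorem Antitone.intervalIntegral_sub_intervalIntegral_le {f : ℝ → ℝ} (hf : Antitone f) (x y : ℝ) :
    (∫ t in (0)..y, f t) - ∫ t in (0)..x, f t ≤ f x * (y - x) := by
  rw [intervalIntegral.integral_interval_sub_left hf.intervalIntegrable hf.intervalIntegrable]
  rcases le_total x y with hxy | hyx
  · calc ∫ t in x..y, f t ≤ ∫ _ in x..y, f x :=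
          intervalIntegral.integral_mono_on hxy hf.intervalIntegrable intervalIntegrable_const
            fun t ht => hf ht.1
      _ = f x * (y - x) := by simp [mul_comm]
  · have h : ∫ _ in y..x, f x ≤ ∫ t in y..x, f t :=
      intervalIntegral.integral_mono_on hyx intervalIntegrable_const hf.intervalIntegrable
        fun t ht => hf ht.2
    rw [intervalIntegral.integral_symm]
    simp only [intervalIntegral.integral_const, smul_eq_mul] at h
    linarith

variable {n : Type*} [Fintype n]

theorem sum_mul_le_sum_mul_of_mem_doublyStochastic [DecidableEq n] {S : Matrix n n ℝ}
    (hS : S ∈ doublyStochastic ℝ n) {f : ℝ → ℝ} (hf : Antitone f) (μ : n → ℝ) :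
    ∑ j, μ j * f (μ j) ≤ ∑ i, ∑ j, S i j * (μ i * f (μ j)) := by
  obtain ⟨hnonneg, hrow, hcol⟩ := mem_doublyStochastic_iff_sum.mp hS
  set Φ : ℝ → ℝ := fun x => ∫ t in (0)..x, f t
  have hΦ : ∑ i, ∑ j, S i j * (Φ (μ i) - Φ (μ j)) = 0 := by
    simp only [mul_sub, Finset.sum_sub_distrib]
    rw [Finset.sum_comm (f := fun i j => S i j * Φ (μ j))]
    simp [mul_comm _ (Φ _), ← Finset.mul_sum, hrow, hcol]
  have hcolsum : ∑ j, μ j * f (μ j) = ∑ i, ∑ j, S i j * (μ j * f (μ j)) := by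
    rw [Finset.sum_comm]
    simp [← Finset.sum_mul, hcol]
  rw [hcolsum, ← sub_nonneg, ← Finset.sum_sub_distrib, ← hΦ]
  refine Finset.sum_le_sum fun i _ => ?_
  rw [← Finset.sum_sub_distrib]
  refine Finset.sum_le_sum fun j _ => ?_
  have := mul_le_mul_of_nonneg_left
    (hf.intervalIntegral_sub_intervalIntegral_le (μ j) (μ i)) (hnonneg i j)
  linarith

namespace Matrix

theorem trace_conj_mul_conj_conj {R : Type*} [CommSemiring R] [StarRing R]
    (V U D E : Matrix n n R) :
    trace (V * D * star V * (U * (V * E * star V) * star U)) =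
      trace (D * (star V * U * V) * E * star (star V * U * V)) := by
  simp only [star_mul, star_star, ← mul_assoc]
  conv_rhs => rw [trace_mul_comm]
  simp only [mul_assoc]

variable [DecidableEq n]

theorem map_normSq_mem_doublyStochastic {W : Matrix n n ℂ} (hW : W ∈ unitaryGroup n ℂ) :
    W.map Complex.normSq ∈ doublyStochastic ℝ n := by
  rw [mem_doublyStochastic_iff_sum]
  refine ⟨fun i j => Complex.normSq_nonneg _, fun i => ?_, fun j => ?_⟩
  · have h := congr_fun (congr_fun (mem_unitaryGroup_iff.mp hW) i) i
    simp only [mul_apply, star_apply, Complex.star_def, Complex.mul_conj, one_apply_eq] at h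
    exact_mod_cast h
  · have h := congr_fun (congr_fun (mem_unitaryGroup_iff'.mp hW) j) j
    simp only [mul_apply, star_apply, Complex.star_def, mul_comm (starRingEnd ℂ _),
      Complex.mul_conj, one_apply_eq] at h
    exact_mod_cast h

theorem trace_diagonal_mul_mul_diagonal_mul_star (d e : n → ℂ) (W : Matrix n n ℂ) :
    trace (diagonal d * W * diagonal e * star W) =
      ∑ i, ∑ j, (Complex.normSq (W i j) : ℂ) * (d i * e j) := by
  simp only [trace, diag_apply, mul_apply, diagonal_apply, star_apply, Complex.star_def,
    ite_mul, mul_ite, zero_mul, mul_zero, Finset.sum_ite_eq, Finset.sum_ite_eq',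
    Finset.mem_univ, if_true, ← Complex.mul_conj]
  refine Finset.sum_congr rfl fun i _ => Finset.sum_congr rfl fun j _ => ?_
  ring

namespace IsHermitian

variable {A : Matrix n n ℂ}

theorem cfc_eq_conj_diagonal (hA : A.IsHermitian) (f : ℝ → ℝ) :
    cfc f A = (hA.eigenvectorUnitary : Matrix n n ℂ) *
      diagonal (fun i => (f (hA.eigenvalues i) : ℂ)) *
        star (hA.eigenvectorUnitary : Matrix n n ℂ) := by
  rw [hA.cfc_eq, IsHermitian.cfc, Unitary.conjStarAlgAut_apply]
  rfl

theorem trace_cfc (hA : A.IsHermitian) (f : ℝ → ℝ) :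
    trace (cfc f A) = ((∑ i, f (hA.eigenvalues i) : ℝ) : ℂ) := by
  rw [hA.cfc_eq_conj_diagonal, trace_mul_cycle, Unitary.coe_star_mul_self, one_mul,
    trace_diagonal, Complex.ofReal_sum]

theorem re_trace_mul_cfc_le_re_trace_mul_conj_cfc (hA : A.IsHermitian) {f : ℝ → ℝ}
    (hf : Antitone f) {U : Matrix n n ℂ} (hU : U ∈ unitaryGroup n ℂ) :
    (trace (A * cfc f A)).re ≤ (trace (A * (U * cfc f A * star U))).re := by
  set μ := hA.eigenvalues
  set V : Matrix n n ℂ := (hA.eigenvectorUnitary : Matrix n n ℂ)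
  have hcfc : ∀ g : ℝ → ℝ, cfc g A = V * diagonal (fun i => (g (μ i) : ℂ)) * star V :=
    hA.cfc_eq_conj_diagonal
  have hA_eq : A = V * diagonal (fun i => (μ i : ℂ)) * star V := (cfc_id' ℝ A).symm.trans (hcfc id)
  have htrace : ∀ U' : Matrix n n ℂ, trace (A * (U' * cfc f A * star U')) =
      ((∑ i, ∑ j, Complex.normSq ((star V * U' * V) i j) * (μ i * f (μ j)) : ℝ) : ℂ) := by
    intro U'
    rw [hcfc, hA_eq, trace_conj_mul_conj_conj, trace_diagonal_mul_mul_diagonal_mul_star]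
    push_cast
    rfl
  have hdiag : trace (A * cfc f A) = ((∑ j, μ j * f (μ j) : ℝ) : ℂ) := by
    have h := htrace 1
    rw [one_mul, star_one, mul_one, mul_one, Unitary.coe_star_mul_self] at h
    simpa [one_apply, apply_ite Complex.normSq] using h
  have hW : star V * U * V ∈ unitaryGroup n ℂ :=
    mul_mem (mul_mem (Unitary.star_mem hA.eigenvectorUnitary.2) hU) hA.eigenvectorUnitary.2
  rw [hdiag, htrace, Complex.ofReal_re, Complex.ofReal_re]
  exact sum_mul_le_sum_mul_of_mem_doublyStochastic (map_normSq_mem_doublyStochastic hW) hf μ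

theorem mexp_ofReal_smul (hA : A.IsHermitian) (t : ℝ) :
    mexp ((t : ℂ) • A) = cfc (fun x => Real.exp (t * x)) A := by
  have hA_eq : A = cfc (id : ℝ → ℝ) A := (cfc_id' ℝ A).symm
  set V := hA.eigenvectorUnitary
  let u : (Matrix n n ℂ)ˣ := ⟨V, star V, Unitary.coe_mul_star_self V, Unitary.coe_star_mul_self V⟩
  have hsmul : (t : ℂ) • cfc (id : ℝ → ℝ) A =
      (u : Matrix n n ℂ) * diagonal (fun i => ((t * hA.eigenvalues i : ℝ) : ℂ)) *
        ((u⁻¹ : (Matrix n n ℂ)ˣ) : Matrix n n ℂ) := by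
    rw [hA.cfc_eq_conj_diagonal, ← Matrix.smul_mul, ← Matrix.mul_smul, ← diagonal_smul]
    congr
    ext i
    simp
  conv_lhs => rw [mexp, hA_eq, hsmul, Matrix.exp_units_conj, Matrix.exp_diagonal]
  rw [hA.cfc_eq_conj_diagonal]
  congr
  ext i
  rw [Pi.coe_exp, ← Complex.exp_eq_exp_ℂ, Complex.ofReal_exp]

end IsHermitian

end Matrix

theorem stmt8 (N : ℕ) (H : Matrix (Fin N) (Fin N) ℂ) (hH : H.IsHermitian)
    (β : ℝ) (hβ : 0 ≤ β)
    (ρ : Matrix (Fin N) (Fin N) ℂ)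
    (hρ : ρ = (Matrix.trace (mexp ((-(β : ℂ)) • H)))⁻¹ • mexp ((-(β : ℂ)) • H)) :
    ∀ U : Matrix (Fin N) (Fin N) ℂ, U ∈ Matrix.unitaryGroup (Fin N) ℂ →
      (Matrix.trace (H * ρ)).re ≤ (Matrix.trace (H * (U * ρ * star U))).re := by
  intro U hU
  set Z := ∑ i, Real.exp (-β * hH.eigenvalues i)
  have hZ : 0 ≤ Z := Finset.sum_nonneg fun i _ => (Real.exp_pos _).le
  have hgibbs : ρ = cfc (fun x => Z⁻¹ * Real.exp (-β * x)) H := by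
    rw [hρ, ← Complex.ofReal_neg, hH.mexp_ofReal_smul, hH.trace_cfc,
      cfc_const_mul Z⁻¹ (fun x => Real.exp (-β * x)) H,
      ← Complex.ofReal_inv, Complex.coe_smul]
  have hanti : Antitone fun x => Z⁻¹ * Real.exp (-β * x) := fun x y hxy =>
    mul_le_mul_of_nonneg_left (Real.exp_le_exp.mpr (by nlinarith)) (inv_nonneg.mpr hZ)
  rw [hgibbs]
  exact hH.re_trace_mul_cfc_le_re_trace_mul_conj_cfc hanti hU
end

section
/- Let δ_1, …, δ_n be real numbers with |δ_i| ∈ {1, 3} for every i. Then there exist γ, β₁, β₂ ∈ ℝ such that 2(β₁+β₂)²·Σ_{i=1}^n δ_i − 8β₁β₂·Σ_{i=1}^n δ_i sin²(γδ_i) > 0 if and only if Σ_{i : |δ_i| = 1} δ_i > 0 or Σ_{i=1}^n δ_i³ > 0. (This quadratic form in (β₁,β₂) is the leading second-order term in the small-mixing-angle expansion of the p = 3/2 warm-start QAOA expected MaxCut cost on a 3-regular graph, where δ_i = (C_Z(flip_i(w)) − C_Z(w))/2.) -/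
/-!
Splitting the indices by `|δᵢ|`, every sum in the statement is a combination of
`S₁ = Σ_{|δᵢ|=1} δᵢ` and `S₃ = Σ_{|δᵢ|=3} δᵢ`, because each summand is an odd function of `δᵢ`.
With `f γ = S₁ sin²γ + S₃ sin²(3γ)` the quadratic form equals
`2(β₁+β₂)²(S₁ + S₃ − f γ) + 2(β₁−β₂)² f γ`, and `S₁ + S₃ − f γ = f (γ + π/2)`,
so it takes a positive value iff `f` does. Finally `f γ = s (S₁ + S₃ (3 − 4s)²)` with
`s = sin²γ ∈ [0, 1]`, and `(3 − 4s)²` sweeps `[0, 9]`, with the value `9` approached as `s → 0⁺`;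
the affine function `u ↦ S₁ + S₃ u` is positive somewhere on `[0, 9]` iff it is at `0` or at `9`.
-/

open Real Filter Topology

lemma Function.Odd.apply_eq_mul_div_of_abs_eq {g : ℝ → ℝ} (hg : g.Odd) {x a : ℝ} (ha : a ≠ 0)
    (hx : |x| = a) : g x = x * (g a / a) := by
  rcases (abs_eq (hx ▸ abs_nonneg x)).mp hx with rfl | rfl
  · field_simp
  · rw [hg]; field_simp

lemma sum_odd_eq_of_abs_eq_one_or_three {ι : Type*} [Fintype ι] (δ : ι → ℝ)
    (hδ : ∀ i, |δ i| = 1 ∨ |δ i| = 3) {g : ℝ → ℝ} (hg : g.Odd) :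
    ∑ i, g (δ i) = g 1 * ∑ i ∈ Finset.univ.filter (fun i => |δ i| = 1), δ i
      + g 3 / 3 * ∑ i ∈ Finset.univ.filter (fun i => ¬|δ i| = 1), δ i := by
  rw [← Finset.sum_filter_add_sum_filter_not Finset.univ (fun i => |δ i| = 1),
    Finset.mul_sum, Finset.mul_sum]
  congr 1 <;> refine Finset.sum_congr rfl fun i hi => ?_ <;> rw [Finset.mem_filter] at hi
  · rw [hg.apply_eq_mul_div_of_abs_eq one_ne_zero hi.2]; ring
  · rw [hg.apply_eq_mul_div_of_abs_eq three_ne_zero ((hδ i).resolve_left hi.2)]; ring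

lemma exists_quadForm_pos_iff (a b : ℝ) :
    (∃ β₁ β₂ : ℝ, 0 < 2 * (β₁ + β₂) ^ 2 * a - 8 * β₁ * β₂ * b) ↔ 0 < a - b ∨ 0 < b := by
  have hdecomp : ∀ β₁ β₂ : ℝ, 2 * (β₁ + β₂) ^ 2 * a - 8 * β₁ * β₂ * b
      = 2 * (β₁ + β₂) ^ 2 * (a - b) + 2 * (β₁ - β₂) ^ 2 * b := fun _ _ => by ring
  simp only [hdecomp]
  constructor
  · rintro ⟨β₁, β₂, hpos⟩
    by_contra! hnonpos
    nlinarith [mul_nonpos_of_nonneg_of_nonpos (sq_nonneg (β₁ + β₂)) hnonpos.1,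
      mul_nonpos_of_nonneg_of_nonpos (sq_nonneg (β₁ - β₂)) hnonpos.2]
  · rintro (h | h)
    · exact ⟨1, 1, by nlinarith⟩
    · exact ⟨1, -1, by nlinarith⟩

lemma add_sub_sinSq_eq_sinSq_add_pi_div_two (S₁ S₃ γ : ℝ) :
    S₁ + S₃ - (S₁ * sin γ ^ 2 + S₃ * sin (3 * γ) ^ 2)
      = S₁ * sin (γ + π / 2) ^ 2 + S₃ * sin (3 * (γ + π / 2)) ^ 2 := by
  have h3 : 3 * (γ + π / 2) = 3 * γ + π / 2 + π := by ring
  rw [h3, sin_add_pi, sin_add_pi_div_two, sin_add_pi_div_two]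
  linear_combination -S₁ * sin_sq_add_cos_sq γ - S₃ * sin_sq_add_cos_sq (3 * γ)

lemma sin_three_mul_sq (γ : ℝ) : sin (3 * γ) ^ 2 = sin γ ^ 2 * (3 - 4 * sin γ ^ 2) ^ 2 := by
  rw [sin_three_mul]; ring

lemma exists_sinSq_pos_iff (S₁ S₃ : ℝ) :
    (∃ γ, 0 < S₁ * sin γ ^ 2 + S₃ * sin (3 * γ) ^ 2) ↔ 0 < S₁ ∨ 0 < S₁ + 9 * S₃ := by
  have hfactor : ∀ γ, S₁ * sin γ ^ 2 + S₃ * sin (3 * γ) ^ 2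
      = sin γ ^ 2 * (S₁ + S₃ * (3 - 4 * sin γ ^ 2) ^ 2) := fun γ => by
    rw [sin_three_mul_sq]; ring
  simp only [hfactor]
  constructor
  · rintro ⟨γ, hpos⟩
    by_contra! hnonpos
    have hu0 : 0 ≤ (3 - 4 * sin γ ^ 2) ^ 2 := sq_nonneg _
    have hu9 : (3 - 4 * sin γ ^ 2) ^ 2 ≤ 9 := by nlinarith [sin_sq_le_one γ, sq_nonneg (sin γ)]
    have hg : S₁ + S₃ * (3 - 4 * sin γ ^ 2) ^ 2 ≤ 0 := by
      nlinarith [mul_nonpos_of_nonneg_of_nonpos (sub_nonneg.mpr hu9) hnonpos.1,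
        mul_nonpos_of_nonneg_of_nonpos hu0 hnonpos.2]
    nlinarith [mul_nonpos_of_nonneg_of_nonpos (sq_nonneg (sin γ)) hg]
  · rintro (h | h)
    · refine ⟨π / 3, ?_⟩
      rw [sin_pi_div_three, div_pow, sq_sqrt zero_le_three]
      norm_num
      exact h
    · have hcont : Continuous fun γ => S₁ + S₃ * (3 - 4 * sin γ ^ 2) ^ 2 := by fun_prop
      have hnear : ∀ᶠ γ in 𝓝[>] 0, 0 < S₁ + S₃ * (3 - 4 * sin γ ^ 2) ^ 2 :=
        nhdsWithin_le_nhds <| continuousAt_const.eventually_lt hcont.continuousAt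
          (by norm_num; linarith)
      have hsin : ∀ᶠ γ in 𝓝[>] (0 : ℝ), 0 < sin γ :=
        eventually_of_mem (Ioo_mem_nhdsGT pi_pos) fun γ hγ => sin_pos_of_pos_of_lt_pi hγ.1 hγ.2
      obtain ⟨γ, hg, hs⟩ := (hnear.and hsin).exists
      exact ⟨γ, mul_pos (pow_pos hs 2) hg⟩

open Classical in
theorem stmt12 (n : ℕ) (δ : Fin n → ℝ) (hδ : ∀ i, |δ i| = 1 ∨ |δ i| = 3) :
    (∃ γ β₁ β₂ : ℝ,
        0 < 2 * (β₁ + β₂) ^ 2 * (∑ i, δ i)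
          - 8 * β₁ * β₂ * (∑ i, δ i * (Real.sin (γ * δ i)) ^ 2)) ↔
      (0 < ∑ i ∈ Finset.univ.filter (fun i => |δ i| = 1), δ i) ∨
        (0 < ∑ i, (δ i) ^ 3) := by
  set S₁ := ∑ i ∈ Finset.univ.filter (fun i => |δ i| = 1), δ i
  set S₃ := ∑ i ∈ Finset.univ.filter (fun i => ¬|δ i| = 1), δ i
  have hodd : ∀ g : ℝ → ℝ, g.Odd → ∑ i, g (δ i) = g 1 * S₁ + g 3 / 3 * S₃ :=
    fun _ hg => sum_odd_eq_of_abs_eq_one_or_three δ hδ hg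
  have hsum : ∑ i, δ i = S₁ + S₃ :=
    (hodd (fun x => x) fun _ => rfl).trans (by norm_num)
  have hcube : ∑ i, δ i ^ 3 = S₁ + 9 * S₃ :=
    (hodd (· ^ 3) fun x => Odd.neg_pow (by decide) x).trans (by norm_num)
  have hsin : ∀ γ, ∑ i, δ i * sin (γ * δ i) ^ 2 = S₁ * sin γ ^ 2 + S₃ * sin (3 * γ) ^ 2 := by
    intro γ
    have hg : (fun x => x * sin (γ * x) ^ 2).Odd := fun x => by
      simp only [mul_neg, sin_neg, neg_sq, neg_mul]
    exact (hodd _ hg).trans (by simp only [mul_one, mul_comm γ 3]; ring)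
  simp only [hsum, hcube, hsin, exists_quadForm_pos_iff, add_sub_sinSq_eq_sinSq_add_pi_div_two]
  rw [← exists_sinSq_pos_iff]
  constructor
  · rintro ⟨γ, h | h⟩
    exacts [⟨_, h⟩, ⟨_, h⟩]
  · rintro ⟨γ, h⟩
    exact ⟨γ, Or.inr h⟩
end

section
/- Let G = (V,E) be a finite simple graph and let b : V → {0,1} be any assignment. Define the Hamming weight W(b) = Σ_{i∈V} b_i and the number of violated edges K(b) = Σ_{⟨i,j⟩∈E} b_i b_j. Then G contains an independent set of size at least W(b) − K(b). Consequently, the maximum of W(b) − K(b) over all b equals the size of a maximum independent set of G. -/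
/-- `S` is an independent set of `G`: no edge of `G` joins two of its members. -/
def IsIndepSet {V : Type*} (G : SimpleGraph V) (S : Finset V) : Prop :=
  ∀ i ∈ S, ∀ j ∈ S, ¬ G.Adj i j

/-- The Hamming weight `W(b) = Σ_i b_i`. -/
def Wgt {V : Type*} [Fintype V] (b : V → ℤ) : ℤ := ∑ i, b i

/-- The number of violated edges `K(b) = Σ_{⟨i,j⟩∈E} b_i b_j`. -/
def Kviol {V : Type*} [Fintype V] [DecidableEq V] (G : SimpleGraph V) [DecidableRel G.Adj]
    (b : V → ℤ) : ℤ :=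
  ∑ e ∈ G.edgeFinset, Sym2.lift ⟨fun i j => b i * b j, fun i j => by ring⟩ e

/-!
A `{0,1}`-assignment `b` is the indicator of its support `T`, so `W(b) = |T|` and `K(b)` is
the number of edges inside `T`. Deleting one endpoint of each such edge from `T` leaves an
independent set of size at least `|T| − K(b)`. Conversely, the indicator of an independent
set `S` has `W − K = |S|`, so the two maxima agree.
-/

open Finset

section

variable {V : Type*} [Fintype V] [DecidableEq V] (G : SimpleGraph V) [DecidableRel G.Adj]

lemma eq_indicator_of_binary {b : V → ℤ} (hb : ∀ i, b i = 0 ∨ b i = 1) :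
    b = fun i => if i ∈ univ.filter (b · = 1) then 1 else 0 := by
  funext i
  rcases hb i with h | h <;> simp [h]

lemma wgt_indicator (T : Finset V) : Wgt (fun i => if i ∈ T then (1 : ℤ) else 0) = #T := by
  simp [Wgt, sum_ite_mem]

lemma kviol_indicator (T : Finset V) :
    Kviol G (fun i => if i ∈ T then (1 : ℤ) else 0) = #(G.edgeFinset ∩ T.sym2) := by
  have hterm : ∀ e : Sym2 V,
      Sym2.lift ⟨fun i j => (if i ∈ T then (1 : ℤ) else 0) * (if j ∈ T then 1 else 0),
        fun i j => by ring⟩ e = if e ∈ T.sym2 then 1 else 0 := by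
    intro e
    induction e using Sym2.ind with
    | _ x y => by_cases hx : x ∈ T <;> by_cases hy : y ∈ T <;> simp [hx, hy]
  simp only [Kviol, hterm, sum_boole, filter_mem_eq_inter]

lemma exists_indepSet_subset_card_le_add_edges (T : Finset V) :
    ∃ S ⊆ T, IsIndepSet G S ∧ #T ≤ #S + #(G.edgeFinset ∩ T.sym2) := by
  set R := (G.edgeFinset ∩ T.sym2).image (fun e => e.out.1)
  refine ⟨T \ R, sdiff_subset, ?_, ?_⟩
  · intro i hi j hj hij
    rw [mem_sdiff] at hi hj
    have he : s(i, j) ∈ G.edgeFinset ∩ T.sym2 :=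
      mem_inter.2 ⟨G.mem_edgeFinset.2 hij, mk_mem_sym2_iff.2 ⟨hi.1, hj.1⟩⟩
    have hR : (s(i, j)).out.1 ∈ R := mem_image_of_mem _ he
    rcases Sym2.mem_iff.1 (Sym2.out_fst_mem s(i, j)) with h | h <;> rw [h] at hR
    exacts [hi.2 hR, hj.2 hR]
  · calc #T ≤ #(T \ R) + #R := card_le_card_sdiff_add_card
      _ ≤ #(T \ R) + #(G.edgeFinset ∩ T.sym2) := Nat.add_le_add_left card_image_le _

lemma exists_indepSet_wgt_sub_kviol_le {b : V → ℤ} (hb : ∀ i, b i = 0 ∨ b i = 1) :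
    ∃ S : Finset V, IsIndepSet G S ∧ Wgt b - Kviol G b ≤ #S := by
  obtain ⟨S, -, hS, hcard⟩ := exists_indepSet_subset_card_le_add_edges G (univ.filter (b · = 1))
  refine ⟨S, hS, ?_⟩
  rw [eq_indicator_of_binary hb, wgt_indicator, kviol_indicator]
  omega

lemma IsIndepSet.wgt_sub_kviol_indicator {S : Finset V} (hS : IsIndepSet G S) :
    Wgt (fun i => if i ∈ S then (1 : ℤ) else 0) -
      Kviol G (fun i => if i ∈ S then (1 : ℤ) else 0) = #S := by
  have hempty : G.edgeFinset ∩ S.sym2 = ∅ := by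
    refine eq_empty_of_forall_notMem fun e he => ?_
    induction e using Sym2.ind with
    | _ i j =>
      obtain ⟨hij, hS'⟩ := mem_inter.1 he
      exact hS i (mk_mem_sym2_iff.1 hS').1 j (mk_mem_sym2_iff.1 hS').2 (G.mem_edgeFinset.1 hij)
  rw [wgt_indicator, kviol_indicator, hempty, card_empty, Nat.cast_zero, sub_zero]

end

lemma exists_maximum_indepSet {V : Type*} [Fintype V] (G : SimpleGraph V) :
    ∃ S, IsIndepSet G S ∧ ∀ S', IsIndepSet G S' → #S' ≤ #S := by
  classical
  have hne : (univ.powerset.filter (IsIndepSet G)).Nonempty :=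
    ⟨∅, mem_filter.2 ⟨empty_mem_powerset _, fun i hi => absurd hi (notMem_empty i)⟩⟩
  obtain ⟨S, hS, hmax⟩ := exists_max_image _ card hne
  exact ⟨S, (mem_filter.1 hS).2,
    fun S' hS' => hmax S' (mem_filter.2 ⟨mem_powerset.2 (subset_univ _), hS'⟩)⟩

theorem stmt16 {V : Type*} [Fintype V] [DecidableEq V]
    (G : SimpleGraph V) [DecidableRel G.Adj]
    (b : V → ℤ) (hb : ∀ i, b i = 0 ∨ b i = 1) :
    (∃ S : Finset V, IsIndepSet G S ∧ Wgt b - Kviol G b ≤ (S.card : ℤ)) ∧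
      ∃ Mx : ℤ,
        IsGreatest {x : ℤ | ∃ b' : V → ℤ, (∀ i, b' i = 0 ∨ b' i = 1) ∧
            x = Wgt b' - Kviol G b'} Mx ∧
        IsGreatest {x : ℤ | ∃ S : Finset V, IsIndepSet G S ∧ x = (S.card : ℤ)} Mx := by
  refine ⟨exists_indepSet_wgt_sub_kviol_le G hb, ?_⟩
  obtain ⟨S₀, hS₀, hmax⟩ := exists_maximum_indepSet G
  refine ⟨#S₀, ⟨⟨_, fun i => ?_, (hS₀.wgt_sub_kviol_indicator G).symm⟩, ?_⟩, ⟨⟨S₀, hS₀, rfl⟩, ?_⟩⟩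
  · by_cases h : i ∈ S₀ <;> simp [h]
  · rintro x ⟨b', hb', rfl⟩
    obtain ⟨S, hS, hle⟩ := exists_indepSet_wgt_sub_kviol_le G hb'
    exact hle.trans (by exact_mod_cast hmax S hS)
  · rintro x ⟨S, hS, rfl⟩
    exact_mod_cast hmax S hS
end

section
/- Let n be an even positive integer and let y_1, …, y_n ∈ {−1, 1}. Then exp(i(π/8)(Σ_{i=1}^n y_i)²) = (e^{iπ/4}/√2)·(1 − i^{n+1}·y_1 y_2 ⋯ y_n), as an identity of complex numbers. (This identity underlies the 'magic angle' QAOA unitary for the Sherrington–Kirkpatrick model, which maps any computational basis state to a cat state of a string and its bitwise complement.) -/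
/-!
Write `n = 2m` and let `k` be the number of indices with `y i = -1`. Then `∑ y i = 2t` with
`t = m - k` and `i^(n+1) ∏ y i = i (-1)^t`, so both sides depend only on the parity of `t`.
Since `e^{iπ/4}/√2 = (1+i)/2`, the right-hand side is `(1+i)(1-i)/2 = 1` for even `t` and
`(1+i)²/2 = i` for odd `t`; the left-hand side is `exp(iπt²/2)`, which is `1` resp. `i`
because `t² ≡ 0` resp. `1 (mod 4)`.
-/

open scoped Real

open Complex

theorem Finset.exists_sum_eq_card_sub_two_mul_and_prod_eq_neg_one_pow {ι R : Type*}
    [CommRing R] (y : ι → R) (s : Finset ι) (hy : ∀ i ∈ s, y i = 1 ∨ y i = -1) :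
    ∃ k : ℕ, ∑ i ∈ s, y i = s.card - 2 * k ∧ ∏ i ∈ s, y i = (-1) ^ k := by
  classical
  induction s using Finset.induction_on with
  | empty => exact ⟨0, by simp⟩
  | @insert a s ha ih =>
    obtain ⟨k, hsum, hprod⟩ := ih fun i hi => hy i (Finset.mem_insert_of_mem hi)
    rw [Finset.sum_insert ha, Finset.prod_insert ha, Finset.card_insert_of_notMem ha, hsum, hprod]
    rcases hy a (Finset.mem_insert_self a s) with ha1 | ha1
    · exact ⟨k, by rw [ha1]; push_cast; ring, by rw [ha1, one_mul]⟩
    · exact ⟨k + 1, by rw [ha1]; push_cast; ring, by rw [ha1, pow_succ, mul_comm]⟩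

theorem Complex.exp_I_pi_div_four_div_sqrt_two :
    exp (I * (π / 4)) / (Real.sqrt 2 : ℂ) = (1 + I) / 2 := by
  have hsqrt_ne : (Real.sqrt 2 : ℂ) ≠ 0 := by
    exact_mod_cast (Real.sqrt_pos.mpr zero_lt_two).ne'
  rw [mul_comm, ← ofReal_ofNat, ← ofReal_div, exp_mul_I, ← ofReal_cos, ← ofReal_sin,
    Real.cos_pi_div_four, Real.sin_pi_div_four]
  push_cast
  field_simp

theorem Complex.exp_I_pi_div_eight_mul_two_mul_sq (t : ℤ) :
    exp (I * (π / 8) * (2 * t) ^ 2)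
      = exp (I * (π / 4)) / (Real.sqrt 2 : ℂ) * (1 - I * (-1) ^ t) := by
  rw [exp_I_pi_div_four_div_sqrt_two]
  rcases Int.even_or_odd' t with ⟨u, rfl | rfl⟩
  · have hexp : I * (π / 8) * (2 * ((2 * u : ℤ) : ℂ)) ^ 2 = (u ^ 2 : ℤ) * (2 * π * I) := by
      push_cast; ring
    rw [hexp, exp_int_mul_two_pi_mul_I, (even_two_mul u).neg_one_zpow]
    linear_combination I_sq / 2
  · have hexp : I * (π / 8) * (2 * ((2 * u + 1 : ℤ) : ℂ)) ^ 2
        = (u ^ 2 + u : ℤ) * (2 * π * I) + π / 2 * I := by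
      push_cast; ring
    rw [hexp, exp_add, exp_int_mul_two_pi_mul_I, exp_pi_div_two_mul_I,
      (odd_two_mul_add_one u).neg_one_zpow]
    linear_combination -I_sq / 2

theorem stmt19_general (n : ℕ) (hn : Even n)
    (y : Fin n → ℝ) (hy : ∀ i, y i = 1 ∨ y i = -1) :
    Complex.exp (Complex.I * (π / 8) * (∑ i, (y i : ℂ)) ^ 2)
      = (Complex.exp (Complex.I * (π / 4)) / (Real.sqrt 2 : ℂ)) *
        (1 - Complex.I ^ (n + 1) * ∏ i, (y i : ℂ)) := by
  obtain ⟨k, hsum, hprod⟩ :=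
    Finset.univ.exists_sum_eq_card_sub_two_mul_and_prod_eq_neg_one_pow (fun i => (y i : ℂ))
      fun i _ => (hy i).imp (by simp [·]) (by simp [·])
  obtain ⟨m, rfl⟩ := hn
  have hsum' : ∑ i, (y i : ℂ) = 2 * ((m - k : ℤ) : ℂ) := by
    rw [hsum, Finset.card_univ, Fintype.card_fin]; push_cast; ring
  have hsign : I ^ (m + m + 1) * ∏ i, (y i : ℂ) = I * (-1) ^ ((m : ℤ) - k) := by
    rw [hprod, zpow_sub₀ (by norm_num), zpow_natCast, zpow_natCast, div_eq_mul_inv, ← inv_pow,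
      inv_neg_one, ← two_mul, pow_succ, pow_mul, I_sq]
    ring
  rw [hsum', hsign, exp_I_pi_div_eight_mul_two_mul_sq]

theorem stmt19 (n : ℕ) (hn : Even n) (hpos : 0 < n)
    (y : Fin n → ℝ) (hy : ∀ i, y i = 1 ∨ y i = -1) :
    Complex.exp (Complex.I * (π / 8) * (∑ i, (y i : ℂ)) ^ 2)
      = (Complex.exp (Complex.I * (π / 4)) / (Real.sqrt 2 : ℂ)) *
        (1 - Complex.I ^ (n + 1) * ∏ i, (y i : ℂ)) :=
  stmt19_general n hn y hy
end
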